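/- arXiv:1510.06291 — 5 statements merged into one kernel-verified Lean document; each statement's English description precedes it below -/
import Mathlib

section
/- Let d be a positive integer, let a_1,…,a_p and b_1,…,b_q be positive integers with a_1+⋯+a_p = b_1+⋯+b_q = d, and set m = p+q−2. Assume m > 0 and m < d / gcd(a_1,…,a_p,b_1,…,b_q). Then there exist permutations τ_1, τ_2, σ_1 of {1,…,d} such that: (i) τ_1 τ_2 σ_1 is the identity; (ii) the cycle partition of τ_1 is (a_1,…,a_p), the cycle partition of τ_2 is (b_1,…,b_q), and σ_1 is a cycle of length m+1; (iii) the subgroup of S_d generated by τ_1, τ_2, σ_1 acts transitively on {1,…,d}. -/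
/-- The cycle partition of a permutation of `Fin d`: the multiset of lengths of its disjoint
cycles, with fixed points counted as cycles of length `1`. It is a partition of `d`. -/
def cyclePartition {d : ℕ} (g : Equiv.Perm (Fin d)) : Multiset ℕ :=
  g.cycleType + Multiset.replicate (d - g.support.card) 1

/-!
Write `τ₁` and `τ₂` through their cycles and `σ` as one cycle meeting every cycle of `τ₁` and of
`τ₂`, which makes the generated group transitive. Such triples with `τ₁ τ₂ σ = 1` are built by
gluing: start from an `n`-cycle, its inverse and a fixed point; splice a new `k`-cycle `c` into a
cycle of `τ₁` just before a point `y` of `σ`, and let `σ` absorb the first point `x` of `c`, via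
`(τ₁, τ₂, σ) ↦ ((y x) τ₁ c, c⁻¹ τ₂, σ (y x))`; the roles of `τ₁` and `τ₂` may be exchanged.
Each gluing adds one cycle and one point of `σ`, so `σ` ends up with `p + q - 1` points.

Every pair of partitions with `(p + q - 2) · gcd < d` arises by gluing, by induction on `p + q`:
undo a gluing at the smallest part `μ`, say of the second partition, by subtracting `μ` from a
larger part `a` of the first. If the gcd of the reduced pair divides `μ`, it is the old gcd, and
the inequality survives because every part is at least `μ`. With a single candidate `a` the
reduced gcd does divide `μ`, as all other parts of the first partition equal `μ`. Otherwise take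
two candidates `a₁, a₂` with reduced gcds `g₁, g₂`, where `g₂ ∤ μ` (else reduce at `a₂`). Then
`g₂ ∤ g₁`, because `g₁ ∣ a₂` and `g₂ ∣ a₂ - μ`; all parts except `a₁ - μ` and `a₂` are multiples
of `lcm g₁ g₂ ≥ 2 g₁`, and this makes the reduction at `a₁` admissible.
-/

namespace List

variable {α : Type*}

theorem exists_isRotated_cons {l : List α} {y : α} (hy : y ∈ l) : ∃ w, l ~r y :: w := by
  obtain ⟨u, v, rfl⟩ := append_of_mem hy
  exact ⟨v ++ u, by simpa using isRotated_append (l := u) (l' := y :: v)⟩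

theorem exists_isRotated_concat {l : List α} {y : α} (hy : y ∈ l) : ∃ w, l ~r w ++ [y] := by
  obtain ⟨u, v, rfl⟩ := append_of_mem hy
  exact ⟨v ++ u, by simpa using isRotated_append (l := u ++ [y]) (l' := v)⟩

theorem flatten_map_reverse_perm (Ls : List (List α)) : (Ls.map reverse).flatten ~ Ls.flatten := by
  induction Ls with
  | nil => rfl
  | cons l Ls ih => exact (reverse_perm l).append ih

variable [DecidableEq α]

theorem formPerm_append_of_ne_nil {M : List α} (hM : M ≠ []) (L : List α) :
    formPerm (M ++ L) = formPerm M * formPerm (M.getLast hM :: L) := by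
  induction M with
  | nil => exact absurd rfl hM
  | cons m M ih =>
    rcases M with _ | ⟨m₂, M⟩
    · simp
    · rw [getLast_cons (cons_ne_nil m₂ M), formPerm_cons_cons, mul_assoc,
        ← ih (cons_ne_nil m₂ M)]
      exact formPerm_cons_cons m m₂ (M ++ L)

theorem formPerm_cons_append_cons {x y : α} {w : List α} (hx : x ∉ y :: w) (L : List α) :
    formPerm (y :: w ++ x :: L) = Equiv.swap y x * formPerm (y :: w) * formPerm (x :: L) := by
  have hconj : formPerm (y :: w) * Equiv.swap ((y :: w).getLast (cons_ne_nil y w)) x =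
      Equiv.swap y x * formPerm (y :: w) := by
    have h := Equiv.swap_apply_apply (formPerm (y :: w)) ((y :: w).getLast (cons_ne_nil y w)) x
    rw [formPerm_apply_getLast, formPerm_apply_of_notMem hx] at h
    rw [h, inv_mul_cancel_right]
  rw [formPerm_append_of_ne_nil (cons_ne_nil y w), formPerm_cons_cons, ← mul_assoc, hconj]

theorem sameCycle_formPerm {l : List α} (hl : l.Nodup) {x y : α} (hx : x ∈ l) (hy : y ∈ l) :
    (formPerm l).SameCycle x y := by
  obtain ⟨i, hi, rfl⟩ := getElem_of_mem hx
  obtain ⟨j, hj, rfl⟩ := getElem_of_mem hy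
  refine ⟨(j + (l.length - i) : ℕ), ?_⟩
  rw [zpow_natCast, formPerm_pow_apply_getElem _ hl]
  congr 1
  rw [show i + (j + (l.length - i)) = j + l.length by omega, Nat.add_mod_right,
    Nat.mod_eq_of_lt hj]

theorem card_support_formPerm [Fintype α] {l : List α} (hl : l.Nodup) (hn : 2 ≤ l.length) :
    (formPerm l).support.card = l.length := by
  rw [support_formPerm_of_nodup l hl fun x h => by simp [h] at hn, toFinset_card_of_nodup hl]

end List

namespace Equiv.Perm

variable {α : Type*} {f g : Perm α} {x y : α}

theorem SameCycle.mul_of_disjoint (h : f.Disjoint g) (hxy : f.SameCycle x y) :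
    (f * g).SameCycle x y := by
  rcases h x with hfx | hgx
  · rw [hxy.eq_of_left hfx]
  · obtain ⟨i, rfl⟩ := hxy
    exact ⟨i, by rw [h.commute.mul_zpow, mul_apply, zpow_apply_eq_self_of_apply_eq_self hgx]⟩

variable [DecidableEq α]

/-- The permutation whose cycles are the lists `Ls`, when these are disjoint. -/
def prodFormPerm (Ls : List (List α)) : Perm α :=
  (Ls.map List.formPerm).prod

@[simp]
theorem prodFormPerm_nil : prodFormPerm ([] : List (List α)) = 1 := rfl

@[simp]
theorem prodFormPerm_cons (l : List α) (Ls : List (List α)) :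
    prodFormPerm (l :: Ls) = l.formPerm * prodFormPerm Ls := rfl

theorem prodFormPerm_apply_of_notMem {Ls : List (List α)} (hx : x ∉ Ls.flatten) :
    prodFormPerm Ls x = x := by
  induction Ls with
  | nil => rfl
  | cons l Ls ih =>
    rw [List.flatten_cons, List.mem_append, not_or] at hx
    rw [prodFormPerm_cons, mul_apply, ih hx.2, List.formPerm_apply_of_notMem hx.1]

theorem disjoint_formPerm_prodFormPerm {l : List α} {Ls : List (List α)}
    (h : l.Disjoint Ls.flatten) : l.formPerm.Disjoint (prodFormPerm Ls) := by
  intro x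
  by_cases hx : x ∈ l
  · exact Or.inr (prodFormPerm_apply_of_notMem (h hx))
  · exact Or.inl (List.formPerm_apply_of_notMem hx)

theorem disjoint_formPerm_prodFormPerm_of_nodup {l : List α} {Ls : List (List α)}
    (h : (l :: Ls).flatten.Nodup) : l.formPerm.Disjoint (prodFormPerm Ls) :=
  disjoint_formPerm_prodFormPerm (List.disjoint_of_nodup_append h)

theorem prodFormPerm_eq_of_perm {Ls Ls' : List (List α)} (hnd : Ls.flatten.Nodup)
    (h : Ls.Perm Ls') : prodFormPerm Ls = prodFormPerm Ls' := by
  refine (h.map _).prod_eq' (List.Pairwise.map _ (fun l l' hll' => ?_)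
    (List.nodup_flatten.mp hnd).2)
  simpa using (disjoint_formPerm_prodFormPerm (Ls := [l']) (by simpa using hll')).commute

theorem prodFormPerm_map_reverse {Ls : List (List α)} (hnd : Ls.flatten.Nodup) :
    prodFormPerm (Ls.map List.reverse) = (prodFormPerm Ls)⁻¹ := by
  induction Ls with
  | nil => simp
  | cons l Ls ih =>
    rw [List.map_cons, prodFormPerm_cons, prodFormPerm_cons, List.formPerm_reverse,
      ih (List.nodup_append.mp hnd).2.1, mul_inv_rev]
    exact (disjoint_formPerm_prodFormPerm_of_nodup hnd).commute.inv_inv.eq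

theorem prodFormPerm_cons_append_cons {bl w L : List α} {Ls : List (List α)} (hbl : bl.Nodup)
    (hw : bl ~r y :: w) (hx : x ∉ bl) (hL : (x :: L).Disjoint Ls.flatten) :
    prodFormPerm ((y :: w ++ x :: L) :: Ls) =
      swap y x * prodFormPerm (bl :: Ls) * (x :: L).formPerm := by
  rw [prodFormPerm_cons, prodFormPerm_cons, List.formPerm_cons_append_cons (hw.mem_iff.not.mp hx),
    ← List.formPerm_eq_of_isRotated hbl hw, mul_assoc,
    (disjoint_formPerm_prodFormPerm hL).commute.eq, ← mul_assoc, ← mul_assoc]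

theorem sameCycle_prodFormPerm {Ls : List (List α)} (hnd : Ls.flatten.Nodup) {l : List α}
    (hl : l ∈ Ls) (hx : x ∈ l) (hy : y ∈ l) : (prodFormPerm Ls).SameCycle x y := by
  have hperm := List.perm_cons_erase hl
  have hnd' : (l :: Ls.erase l).flatten.Nodup := hperm.flatten.nodup_iff.mp hnd
  rw [prodFormPerm_eq_of_perm hnd hperm, prodFormPerm_cons]
  exact (List.sameCycle_formPerm (List.nodup_append.mp hnd').1 hx hy).mul_of_disjoint
    (disjoint_formPerm_prodFormPerm_of_nodup hnd')

theorem cycleType_prodFormPerm [Fintype α] {Ls : List (List α)} (hnd : Ls.flatten.Nodup) :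
    (prodFormPerm Ls).cycleType = ((Ls.map List.length).filter (2 ≤ ·) : List ℕ) := by
  induction Ls with
  | nil => simp
  | cons l Ls ih =>
    have hl : l.Nodup := (List.nodup_append.mp hnd).1
    rw [prodFormPerm_cons, (disjoint_formPerm_prodFormPerm_of_nodup hnd).cycleType_mul,
      ih (List.nodup_append.mp hnd).2.1, List.map_cons, List.filter_cons]
    by_cases hlen : 2 ≤ l.length
    · simp [(List.isCycle_formPerm hl hlen).cycleType, List.card_support_formPerm hl hlen, hlen]
    · have hform : l.formPerm = 1 := (List.formPerm_eq_one_iff l hl).mpr (by omega)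
      simp [hform, hlen]

end Equiv.Perm

section Constellation

open Equiv Equiv.Perm List

variable {α : Type*} [DecidableEq α]

/-- `LA` and `LB` list the cycles, fixed points included, of `τ₁ = prodFormPerm LA` and
`τ₂ = prodFormPerm LB` on the points of `LA.flatten`, and `S` is a cycle `σ` with `τ₁ τ₂ σ = 1`
meeting every cycle of `τ₁` and of `τ₂`. -/
structure IsConstellation (LA LB : List (List α)) (S : List α) : Prop where
  nodup : LA.flatten.Nodup
  perm : LB.flatten.Perm LA.flatten
  nodup_cycle : S.Nodup
  cycle_subset : S ⊆ LA.flatten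
  mul_mul_eq_one : prodFormPerm LA * prodFormPerm LB * S.formPerm = 1
  length_eq : S.length + 1 = LA.length + LB.length
  meets_left : ∀ l ∈ LA, ∃ s ∈ S, s ∈ l
  meets_right : ∀ l ∈ LB, ∃ s ∈ S, s ∈ l

namespace IsConstellation

variable {LA LB : List (List α)} {S : List α}

theorem singleton {V : List α} (hV : V.Nodup) {x : α} (hx : x ∈ V) :
    IsConstellation [V] [V.reverse] [x] where
  nodup := by simpa using hV
  perm := by simp
  nodup_cycle := nodup_singleton x
  cycle_subset := by simpa using hx
  mul_mul_eq_one := by simp [formPerm_reverse]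
  length_eq := rfl
  meets_left := by simpa using hx
  meets_right := by simpa using hx

theorem of_perm_left {LA' : List (List α)} (h : IsConstellation LA LB S) (hp : LA.Perm LA') :
    IsConstellation LA' LB S where
  nodup := hp.flatten.nodup_iff.mp h.nodup
  perm := h.perm.trans hp.flatten
  nodup_cycle := h.nodup_cycle
  cycle_subset := fun _ hs => hp.flatten.mem_iff.mp (h.cycle_subset hs)
  mul_mul_eq_one := by rw [← prodFormPerm_eq_of_perm h.nodup hp, h.mul_mul_eq_one]
  length_eq := by rw [← hp.length_eq, h.length_eq]
  meets_left := fun l hl => h.meets_left l (hp.mem_iff.mpr hl)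
  meets_right := h.meets_right

/-- Exchanging `τ₁` and `τ₂`: `τ₂⁻¹ τ₁⁻¹ σ⁻¹ = (σ τ₁ τ₂)⁻¹ = 1`. -/
theorem symm (h : IsConstellation LA LB S) :
    IsConstellation (LB.map reverse) (LA.map reverse) S.reverse where
  nodup := ((flatten_map_reverse_perm LB).trans h.perm).nodup_iff.mpr h.nodup
  perm :=
    ((flatten_map_reverse_perm LA).trans h.perm.symm).trans (flatten_map_reverse_perm LB).symm
  nodup_cycle := nodup_reverse.mpr h.nodup_cycle
  cycle_subset := fun _ hs => (flatten_map_reverse_perm LB).mem_iff.mpr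
    (h.perm.mem_iff.mpr (h.cycle_subset (mem_reverse.mp hs)))
  mul_mul_eq_one := by
    have hσ : S.formPerm = (prodFormPerm LA * prodFormPerm LB)⁻¹ :=
      eq_inv_of_mul_eq_one_right h.mul_mul_eq_one
    rw [prodFormPerm_map_reverse (h.perm.nodup_iff.mpr h.nodup), prodFormPerm_map_reverse h.nodup,
      formPerm_reverse, hσ]
    group
  length_eq := by simp only [length_reverse, length_map]; have := h.length_eq; omega
  meets_left := by
    simp only [mem_map, mem_reverse, forall_exists_index, and_imp, forall_apply_eq_imp_iff₂]
    exact h.meets_right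
  meets_right := by
    simp only [mem_map, mem_reverse, forall_exists_index, and_imp, forall_apply_eq_imp_iff₂]
    exact h.meets_left

/-- The rotations put `y` first in `bl` and last in `S`; the new triple is
`((y x) τ₁ c, c⁻¹ τ₂, σ (y x))` with `c = x :: L`. -/
theorem attach_of_isRotated {bl : List α} (h : IsConstellation (bl :: LA) LB S) {x : α}
    {L : List α} (hL : (x :: L).Nodup) (hfresh : (x :: L).Disjoint (bl :: LA).flatten) {y : α}
    {w N : List α} (hw : bl ~r y :: w) (hN : S ~r N ++ [y]) :
    IsConstellation ((y :: w ++ x :: L) :: LA) ((x :: L).reverse :: LB) (N ++ [y, x]) := by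
  have hxP : x ∉ (bl :: LA).flatten := hfresh mem_cons_self
  have hxS : x ∉ S := fun hx => hxP (h.cycle_subset hx)
  have hmemS : ∀ s, s ∈ N ++ [y, x] ↔ s ∈ S ∨ s = x := fun s => by
    rw [hN.mem_iff]; simp [or_assoc]
  have hflat : ((y :: w ++ x :: L) :: LA).flatten.Perm ((x :: L) ++ (bl :: LA).flatten) := by
    rw [flatten_cons, flatten_cons, ← append_assoc]
    exact ((hw.perm.symm.append_right _).trans perm_append_comm).append_right _
  have hτ₁ := prodFormPerm_cons_append_cons (nodup_append.mp h.nodup).1 hw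
    (fun hx => hxP (mem_append_left _ hx)) fun _ hz hz' => hfresh hz (mem_append_right _ hz')
  constructor
  · exact hflat.nodup_iff.mpr (hL.append h.nodup hfresh)
  · rw [flatten_cons]
    exact ((reverse_perm _).append h.perm).trans hflat.symm
  · rw [show N ++ [y, x] = N ++ [y] ++ [x] by simp]
    exact (hN.nodup_iff.mp h.nodup_cycle).append (nodup_singleton x) (by simpa [← hN.mem_iff])
  · intro s hs
    rcases (hmemS s).mp hs with hs | rfl
    · exact hflat.mem_iff.mpr (mem_append_right _ (h.cycle_subset hs))
    · exact hflat.mem_iff.mpr (mem_append_left _ mem_cons_self)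
  · rw [hτ₁, formPerm_append_pair, ← formPerm_eq_of_isRotated h.nodup_cycle hN,
      prodFormPerm_cons (x :: L).reverse, formPerm_reverse]
    calc _ = swap y x * (prodFormPerm (bl :: LA) * prodFormPerm LB * S.formPerm) * swap y x := by
          group
      _ = 1 := by rw [h.mul_mul_eq_one, mul_one, swap_mul_self]
  · have := h.length_eq
    have := hN.perm.length_eq
    simp only [length_append, length_cons, length_nil] at *
    omega
  · refine forall_mem_cons.mpr ⟨⟨y, by simp, by simp⟩, fun l hl => ?_⟩
    obtain ⟨s, hs, hsl⟩ := h.meets_left l (mem_cons_of_mem _ hl)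
    exact ⟨s, (hmemS s).mpr (.inl hs), hsl⟩
  · refine forall_mem_cons.mpr ⟨⟨x, by simp, by simp⟩, fun l hl => ?_⟩
    obtain ⟨s, hs, hsl⟩ := h.meets_right l hl
    exact ⟨s, (hmemS s).mpr (.inl hs), hsl⟩

theorem attach {bl : List α} (h : IsConstellation (bl :: LA) LB S) {x : α} {L : List α}
    (hL : (x :: L).Nodup) (hfresh : (x :: L).Disjoint (bl :: LA).flatten) :
    ∃ bl' S', bl'.Perm (bl ++ x :: L) ∧
      IsConstellation (bl' :: LA) ((x :: L).reverse :: LB) S' := by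
  obtain ⟨y, hyS, hybl⟩ := h.meets_left bl mem_cons_self
  obtain ⟨w, hw⟩ := exists_isRotated_cons hybl
  obtain ⟨N, hN⟩ := exists_isRotated_concat hyS
  exact ⟨_, _, hw.perm.symm.append_right _, h.attach_of_isRotated hL hfresh hw hN⟩

theorem exists_apply_eq (h : IsConstellation LA LB S) {H : Subgroup (Perm α)}
    (hτ : prodFormPerm LA ∈ H) (hσ : S.formPerm ∈ H) {x y : α} (hx : x ∈ LA.flatten)
    (hy : y ∈ LA.flatten) : ∃ g ∈ H, g x = y := by
  obtain ⟨lx, hlx, hxl⟩ := mem_flatten.mp hx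
  obtain ⟨ly, hly, hyl⟩ := mem_flatten.mp hy
  obtain ⟨sx, hsx, hsxl⟩ := h.meets_left lx hlx
  obtain ⟨sy, hsy, hsyl⟩ := h.meets_left ly hly
  obtain ⟨i, hi⟩ := sameCycle_prodFormPerm h.nodup hlx hxl hsxl
  obtain ⟨j, hj⟩ := sameCycle_formPerm h.nodup_cycle hsx hsy
  obtain ⟨k, hk⟩ := sameCycle_prodFormPerm h.nodup hly hsyl hyl
  exact ⟨prodFormPerm LA ^ k * S.formPerm ^ j * prodFormPerm LA ^ i,
    mul_mem (mul_mem (zpow_mem hτ k) (zpow_mem hσ j)) (zpow_mem hτ i), by simp [hi, hj, hk]⟩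

end IsConstellation

end Constellation

theorem Multiset.sum_cons_add_erase {A : Multiset ℕ} {a : ℕ} (ha : a ∈ A) (k : ℕ) :
    ((a + k) ::ₘ A.erase a).sum = A.sum + k := by
  rw [Multiset.sum_cons, ← Multiset.sum_erase ha]; ring

theorem Multiset.sum_cons_sub_erase {A : Multiset ℕ} {a μ : ℕ} (ha : a ∈ A) (hμa : μ ≤ a) :
    ((a - μ) ::ₘ A.erase a).sum + μ = A.sum := by
  rw [Multiset.sum_cons, ← Multiset.sum_erase ha]; omega

inductive Buildable : Multiset ℕ → Multiset ℕ → Prop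
  | single (n : ℕ) (hn : 0 < n) : Buildable {n} {n}
  | attach {A B : Multiset ℕ} (a k : ℕ) (ha : a ∈ A) (hk : 0 < k) (h : Buildable A B) :
      Buildable ((a + k) ::ₘ A.erase a) (k ::ₘ B)
  | swap {A B : Multiset ℕ} (h : Buildable A B) : Buildable B A

section Realizable

open List

variable (α : Type*) [DecidableEq α]

def Realizable (A B : Multiset ℕ) : Prop :=
  ∀ V : List α, V.Nodup → V.length = A.sum → ∃ LA LB S, IsConstellation LA LB S ∧
    LA.flatten.Perm V ∧ (LA.map length : Multiset ℕ) = A ∧ (LB.map length : Multiset ℕ) = B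

variable {α}

theorem realizable_single {n : ℕ} (hn : 0 < n) : Realizable α {n} {n} := by
  intro V hV hlen
  have hV0 : V ≠ [] := ne_nil_of_length_pos (by simpa [hlen] using hn)
  exact ⟨[V], [V.reverse], [V.head hV0], .singleton hV (head_mem hV0), by simp,
    by simp [hlen], by simp [hlen]⟩

theorem Realizable.attach {A B : Multiset ℕ} (h : Realizable α A B) {a k : ℕ} (ha : a ∈ A)
    (hk : 0 < k) : Realizable α ((a + k) ::ₘ A.erase a) (k ::ₘ B) := by
  intro V hV hlen
  rw [Multiset.sum_cons_add_erase ha] at hlen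
  obtain ⟨LA, LB, S, hc, hflat, hA, hB⟩ :=
    h (V.take A.sum) (hV.sublist (take_sublist A.sum V)) (by simp [hlen])
  obtain ⟨bl, hbl, rfl⟩ : ∃ bl ∈ LA, bl.length = a := by
    rw [← hA, Multiset.mem_coe] at ha; simpa using ha
  have hLA := perm_cons_erase hbl
  have hflat' := hLA.flatten.symm.trans hflat
  obtain ⟨x, L, hxL⟩ := exists_cons_of_length_pos (l := V.drop A.sum) (by simp [hlen, hk])
  have hfresh : (x :: L).Disjoint (bl :: LA.erase bl).flatten := hxL ▸ fun z hz hz' =>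
    disjoint_take_drop hV le_rfl (hflat'.mem_iff.mp hz') hz
  obtain ⟨bl', S', hbl', hc'⟩ :=
    (hc.of_perm_left hLA).attach (hxL ▸ hV.sublist (drop_sublist A.sum V)) hfresh
  have hk : L.length + 1 = k := by rw [← length_cons, ← hxL, length_drop]; omega
  refine ⟨bl' :: LA.erase bl, (x :: L).reverse :: LB, S', hc', ?_, ?_, by simp [← hB, hk]⟩
  · calc (bl' :: LA.erase bl).flatten
        _ ~ x :: L ++ (bl :: LA.erase bl).flatten := by
          rw [flatten_cons, flatten_cons, ← append_assoc]
          exact (hbl'.trans perm_append_comm).append_right _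
        _ ~ V.drop A.sum ++ V.take A.sum := hxL ▸ hflat'.append_left _
        _ ~ V.take A.sum ++ V.drop A.sum := perm_append_comm
        _ = V := take_append_drop A.sum V
  · rw [← hA, Multiset.coe_eq_coe.mpr (hLA.map length)]
    simp [hbl'.length_eq, hk]

theorem Realizable.swap {A B : Multiset ℕ} (h : Realizable α A B) (hsum : A.sum = B.sum) :
    Realizable α B A := by
  intro V hV hlen
  obtain ⟨LA, LB, S, hc, hflat, hA, hB⟩ := h V hV (hlen.trans hsum.symm)
  refine ⟨LB.map reverse, LA.map reverse, S.reverse, hc.symm,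
    (flatten_map_reverse_perm LB).trans (hc.perm.trans hflat), ?_, ?_⟩ <;>
    simpa [Function.comp_def]

end Realizable

namespace Buildable

theorem sum_eq {A B : Multiset ℕ} (h : Buildable A B) : A.sum = B.sum := by
  induction h with
  | single n hn => rfl
  | attach a k ha hk h ih => rw [Multiset.sum_cons_add_erase ha, Multiset.sum_cons, ih, add_comm]
  | swap h ih => exact ih.symm

theorem realizable {α : Type*} [DecidableEq α] {A B : Multiset ℕ} (h : Buildable A B) :
    Realizable α A B := by
  induction h with
  | single n hn => exact realizable_single hn
  | attach a k ha hk h ih => exact ih.attach ha hk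
  | swap h ih => exact ih.swap h.sum_eq

theorem singleton_left {B : Multiset ℕ} (hB0 : B ≠ 0) (hB : ∀ b ∈ B, 0 < b) :
    Buildable {B.sum} B := by
  induction B using Multiset.induction_on with
  | empty => exact absurd rfl hB0
  | cons b B ih =>
    rcases eq_or_ne B 0 with rfl | hB0'
    · simpa using single b (hB b (Multiset.mem_cons_self b 0))
    · have h := attach B.sum b (Multiset.mem_singleton_self _) (hB b (Multiset.mem_cons_self b B))
        (ih hB0' fun x hx => hB x (Multiset.mem_cons_of_mem hx))
      rwa [Multiset.erase_singleton, add_comm, ← Multiset.sum_cons, Multiset.cons_zero] at h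

theorem of_reduce {A B : Multiset ℕ} {a μ : ℕ} (ha : a ∈ A) (hμ : μ ∈ B) (hμa : μ < a)
    (hμ0 : 0 < μ) (h : Buildable ((a - μ) ::ₘ A.erase a) (B.erase μ)) : Buildable A B := by
  have h' := attach (a - μ) μ (Multiset.mem_cons_self _ _) hμ0 h
  rwa [Multiset.erase_cons_head, Nat.sub_add_cancel hμa.le, Multiset.cons_erase ha,
    Multiset.cons_erase hμ] at h'

end Buildable

theorem Multiset.card_mul_le_sum_of_dvd {s : Multiset ℕ} {k : ℕ} (hpos : ∀ x ∈ s, 0 < x)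
    (hdvd : ∀ x ∈ s, k ∣ x) : Multiset.card s * k ≤ s.sum := by
  simpa using Multiset.card_nsmul_le_sum fun x hx => Nat.le_of_dvd (hpos x hx) (hdvd x hx)

theorem Nat.two_mul_le_lcm {m n : ℕ} (hm : 0 < m) (hn : 0 < n) (h : ¬ n ∣ m) :
    2 * m ≤ Nat.lcm m n := by
  obtain ⟨c, hc⟩ : m ∣ Nat.lcm m n := Nat.dvd_lcm_left m n
  rcases c with _ | _ | c
  · simp [Nat.lcm_ne_zero hm.ne' hn.ne'] at hc
  · exact absurd (hc ▸ Nat.dvd_lcm_right m n) (by simpa using h)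
  · rw [hc]; nlinarith

theorem mul_add_lt_of_dvd {m G μ d : ℕ} (hG : 0 < G) (hGμ : G ∣ μ)
    (hadm : (m + 1) * G < d) (hμ : (m + 3) * μ ≤ 2 * d) : m * G + μ < d := by
  obtain ⟨c, rfl⟩ := hGμ
  rcases Nat.lt_or_ge c 2 with hc | hc
  · interval_cases c <;> linarith
  · nlinarith [Nat.mul_le_mul_left ((m + 1) * G) hc]

section Admissible

open Multiset

/-- Boccara's condition `m < d / gcd` with `m = p + q - 2`, in the form `m * gcd < d`. -/
def Admissible (A B : Multiset ℕ) : Prop :=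
  (card A + card B - 2) * (A + B).gcd < A.sum

theorem admissible_of_lt_div {A B : Multiset ℕ}
    (h : card A + card B - 2 < A.sum / (A + B).gcd) : Admissible A B := by
  have hG : 0 < (A + B).gcd := Nat.pos_of_ne_zero fun h0 => by simp [h0] at h
  have := (Nat.le_div_iff_mul_le hG).mp h
  unfold Admissible
  nlinarith

theorem Admissible.symm {A B : Multiset ℕ} (hsum : A.sum = B.sum) (h : Admissible A B) :
    Admissible B A := by
  unfold Admissible at h ⊢
  rwa [add_comm (card B), add_comm B, ← hsum]

theorem not_admissible_of_forall_eq {A B : Multiset ℕ} {μ : ℕ} (hB : 2 ≤ card B)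
    (hAB : ∀ x ∈ A + B, x = μ) : ¬ Admissible A B := by
  have hA : A = replicate (card A) μ :=
    eq_replicate.mpr ⟨rfl, fun x hx => hAB x (mem_add.mpr (.inl hx))⟩
  obtain ⟨y, hy⟩ := exists_mem_of_ne_zero (card_pos.mp (by omega) : B ≠ 0)
  have hG : (A + B).gcd = μ := Nat.dvd_antisymm
    (hAB y (mem_add.mpr (.inr hy)) ▸ gcd_dvd (mem_add.mpr (.inr hy)))
    (dvd_gcd.mpr fun x hx => (hAB x hx).symm ▸ dvd_rfl)
  intro h
  unfold Admissible at h
  rw [hG, hA, sum_replicate, card_replicate, smul_eq_mul] at h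
  have := lt_of_mul_lt_mul_right h
  omega

variable {A B : Multiset ℕ} {a μ : ℕ}

theorem admissible_reduce_iff (ha : a ∈ A) (hμ : μ ∈ B) (hμa : μ ≤ a) (hsum : A.sum = B.sum) :
    Admissible ((a - μ) ::ₘ A.erase a) (B.erase μ) ↔
      (card A + card B - 3) * ((a - μ) ::ₘ A.erase a + B.erase μ).gcd < (B.erase μ).sum := by
  have := sum_cons_sub_erase ha hμa
  have := sum_erase hμ
  have := card_erase_add_one hμ
  rw [Admissible, card_cons, card_erase_add_one ha,
    show card A + card (B.erase μ) - 2 = card A + card B - 3 by omega,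
    show ((a - μ) ::ₘ A.erase a).sum = (B.erase μ).sum by omega]

theorem gcd_dvd_gcd_reduce (ha : a ∈ A) (hμ : μ ∈ B) :
    (A + B).gcd ∣ ((a - μ) ::ₘ A.erase a + B.erase μ).gcd := by
  have hG : ∀ y ∈ A + B, (A + B).gcd ∣ y := fun y hy => gcd_dvd hy
  refine dvd_gcd.mpr fun x hx => ?_
  simp only [mem_add, mem_cons] at hx
  rcases hx with (rfl | hx) | hx
  · exact Nat.dvd_sub (hG a (mem_add.mpr (.inl ha))) (hG μ (mem_add.mpr (.inr hμ)))
  · exact hG x (mem_add.mpr (.inl (mem_of_mem_erase hx)))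
  · exact hG x (mem_add.mpr (.inr (mem_of_mem_erase hx)))

theorem dvd_gcd_of_dvd_gcd_reduce (hμa : μ ≤ a) {k : ℕ}
    (hk : k ∣ ((a - μ) ::ₘ A.erase a + B.erase μ).gcd) (hkμ : k ∣ μ) : k ∣ (A + B).gcd := by
  have hk' := dvd_gcd.mp hk
  refine dvd_gcd.mpr fun x hx => ?_
  rcases mem_add.mp hx with hx | hx
  · by_cases hxa : x = a
    · rw [hxa, ← Nat.sub_add_cancel hμa]
      exact dvd_add (hk' _ (by simp)) hkμ
    · exact hk' x (by simp [mem_erase_of_ne hxa, hx])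
  · by_cases hxμ : x = μ
    · exact hxμ ▸ hkμ
    · exact hk' x (by simp [mem_erase_of_ne hxμ, hx])

theorem admissible_reduce_of_dvd (hsum : A.sum = B.sum) (h3 : 3 ≤ card A + card B)
    (hadm : Admissible A B) (hμ : μ ∈ B) (hμ0 : 0 < μ) (hμmin : ∀ x ∈ A + B, μ ≤ x) (ha : a ∈ A)
    (hμa : μ ≤ a) (hdvd : ((a - μ) ::ₘ A.erase a + B.erase μ).gcd ∣ μ) :
    Admissible ((a - μ) ::ₘ A.erase a) (B.erase μ) := by
  have hgG := Nat.dvd_antisymm (dvd_gcd_of_dvd_gcd_reduce hμa dvd_rfl hdvd)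
    (gcd_dvd_gcd_reduce ha hμ)
  have hpμ : card A * μ ≤ A.sum := by
    simpa using card_nsmul_le_sum fun x hx => hμmin x (mem_add.mpr (.inl hx))
  have hqμ : card B * μ ≤ A.sum := by
    simpa [hsum] using card_nsmul_le_sum fun x hx => hμmin x (mem_add.mpr (.inr hx))
  have hlt := mul_add_lt_of_dvd (m := card A + card B - 3)
    (Nat.pos_of_dvd_of_pos (gcd_dvd (mem_add.mpr (.inr hμ))) hμ0) (gcd_dvd (mem_add.mpr (.inr hμ)))
    (by rwa [show card A + card B - 3 + 1 = card A + card B - 2 by omega])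
    (by rw [show card A + card B - 3 + 3 = card A + card B by omega]; linarith)
  have := sum_erase hμ
  rw [admissible_reduce_iff ha hμ hμa hsum, hgG]
  omega

theorem mul_gcd_reduce_le (hA : ∀ x ∈ A, 0 < x) (hB : ∀ x ∈ B, 0 < x) (hsum : A.sum = B.sum)
    (hμ : μ ∈ B) {a₁ a₂ : ℕ} (ha₁ : a₁ ∈ A) (ha₂ : a₂ ∈ A.erase a₁) (hμa₁ : μ < a₁)
    (hndvd : ¬ ((a₂ - μ) ::ₘ A.erase a₂ + B.erase μ).gcd ∣
      ((a₁ - μ) ::ₘ A.erase a₁ + B.erase μ).gcd) :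
    (card A + card B - 2) * ((a₁ - μ) ::ₘ A.erase a₁ + B.erase μ).gcd ≤ (B.erase μ).sum := by
  set g₁ := ((a₁ - μ) ::ₘ A.erase a₁ + B.erase μ).gcd
  set g₂ := ((a₂ - μ) ::ₘ A.erase a₂ + B.erase μ).gcd
  have hg₁ : ∀ x ∈ (a₁ - μ) ::ₘ A.erase a₁ + B.erase μ, g₁ ∣ x := fun x hx => gcd_dvd hx
  have hg₂ : ∀ x ∈ (a₂ - μ) ::ₘ A.erase a₂ + B.erase μ, g₂ ∣ x := fun x hx => gcd_dvd hx
  have hg₁pos : 0 < g₁ := Nat.pos_of_dvd_of_pos (hg₁ _ (by simp)) (by omega : 0 < a₁ - μ)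
  have hg₂pos : 0 < g₂ := by
    have ha₁' : a₁ ∈ A.erase a₂ := by
      rcases eq_or_ne a₁ a₂ with h | h
      · exact h ▸ ha₂
      · exact (mem_erase_of_ne h).mpr ha₁
    exact Nat.pos_of_dvd_of_pos (hg₂ a₁ (by simp [ha₁'])) (hA a₁ ha₁)
  have hl₁ := Nat.two_mul_le_lcm hg₁pos hg₂pos hndvd
  have hR : card ((A.erase a₁).erase a₂) * Nat.lcm g₁ g₂ ≤ ((A.erase a₁).erase a₂).sum :=
    card_mul_le_sum_of_dvd (fun x hx => hA x (mem_of_mem_erase (mem_of_mem_erase hx)))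
      fun x hx => Nat.lcm_dvd (hg₁ x (by simp [mem_of_mem_erase hx]))
        (hg₂ x (by rw [erase_comm] at hx; simp [mem_of_mem_erase hx]))
  have hB' : card (B.erase μ) * Nat.lcm g₁ g₂ ≤ (B.erase μ).sum :=
    card_mul_le_sum_of_dvd (fun x hx => hB x (mem_of_mem_erase hx)) fun x hx =>
      Nat.lcm_dvd (hg₁ x (mem_add.mpr (.inr hx))) (hg₂ x (mem_add.mpr (.inr hx)))
  have hg₁a₁ : g₁ ≤ a₁ - μ := Nat.le_of_dvd (by omega) (hg₁ _ (by simp))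
  have hg₁a₂ : g₁ ≤ a₂ :=
    Nat.le_of_dvd (hA a₂ (mem_of_mem_erase ha₂)) (hg₁ a₂ (by simp [ha₂]))
  have hE : (a₁ - μ) + a₂ + ((A.erase a₁).erase a₂).sum = (B.erase μ).sum := by
    have := sum_erase ha₁; have := sum_erase ha₂; have := sum_erase hμ; omega
  rw [← card_erase_add_one ha₁, ← card_erase_add_one ha₂, ← card_erase_add_one hμ,
    show ∀ P Q : ℕ, P + 1 + 1 + (Q + 1) - 2 = P + Q + 1 by omega]
  nlinarith [Nat.mul_le_mul_left (card ((A.erase a₁).erase a₂)) hl₁,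
    Nat.mul_le_mul_left (card (B.erase μ)) hl₁]

theorem exists_admissible_reduce (hA : ∀ x ∈ A, 0 < x) (hB : ∀ x ∈ B, 0 < x)
    (hsum : A.sum = B.sum) (hp : 2 ≤ card A) (hadm : Admissible A B) (hμ : μ ∈ B)
    (hμmin : ∀ x ∈ A + B, μ ≤ x) (ha : ∃ a ∈ A, μ < a) :
    ∃ a ∈ A, μ < a ∧ Admissible ((a - μ) ::ₘ A.erase a) (B.erase μ) := by
  obtain ⟨a₁, ha₁, hμa₁⟩ := ha
  have h3 : 3 ≤ card A + card B := by have := card_pos_iff_exists_mem.mpr ⟨μ, hμ⟩; omega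
  have hreduce := fun {a} (ha : a ∈ A) (hμa : μ ≤ a) =>
    admissible_reduce_of_dvd hsum h3 hadm hμ (hB μ hμ) hμmin ha hμa
  by_cases htwo : ∃ a₂ ∈ A.erase a₁, μ < a₂
  · obtain ⟨a₂, ha₂, hμa₂⟩ := htwo
    have ha₂A := mem_of_mem_erase ha₂
    by_cases hdvd : ((a₂ - μ) ::ₘ A.erase a₂ + B.erase μ).gcd ∣ μ
    · exact ⟨a₂, ha₂A, hμa₂, hreduce ha₂A hμa₂.le hdvd⟩
    refine ⟨a₁, ha₁, hμa₁, (admissible_reduce_iff ha₁ hμ hμa₁.le hsum).mpr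
      (lt_of_lt_of_le ?_ (mul_gcd_reduce_le hA hB hsum hμ ha₁ ha₂ hμa₁ fun h => hdvd ?_))⟩
    · exact Nat.mul_lt_mul_of_pos_right (by omega)
        (Nat.pos_of_dvd_of_pos (gcd_dvd (by simp)) (by omega : 0 < a₁ - μ))
    · have h₁ := h.trans (gcd_dvd (by simp [ha₂]) : _ ∣ a₂)
      have h₂ : ((a₂ - μ) ::ₘ A.erase a₂ + B.erase μ).gcd ∣ a₂ - μ := gcd_dvd (by simp)
      simpa [Nat.sub_sub_self hμa₂.le] using Nat.dvd_sub h₁ h₂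
  · simp only [not_exists, not_and, not_lt] at htwo
    obtain ⟨x, hx⟩ := card_pos_iff_exists_mem.mp
      (by have := card_erase_add_one ha₁; omega : 0 < card (A.erase a₁))
    have hxμ : x = μ :=
      le_antisymm (htwo x hx) (hμmin x (mem_add.mpr (.inl (mem_of_mem_erase hx))))
    exact ⟨a₁, ha₁, hμa₁, hreduce ha₁ hμa₁.le (gcd_dvd (by simp [← hxμ, hx]))⟩

end Admissible

theorem Multiset.exists_lt_across_or_forall_eq {A B : Multiset ℕ} (hA0 : A ≠ 0) (hB0 : B ≠ 0)
    {μ : ℕ} (hμ : μ ∈ A + B) (hμmin : ∀ x ∈ A + B, μ ≤ x) :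
    (μ ∈ B ∧ ∃ a ∈ A, μ < a) ∨ (μ ∈ A ∧ ∃ b ∈ B, μ < b) ∨ ∀ x ∈ A + B, x = μ := by
  by_contra! h
  obtain ⟨hB, hA, x, hx, hxμ⟩ := h
  have hA_eq : μ ∈ B → ∀ a ∈ A, a = μ := fun hμB a ha =>
    le_antisymm (hB hμB a ha) (hμmin a (mem_add.mpr (.inl ha)))
  have hB_eq : μ ∈ A → ∀ b ∈ B, b = μ := fun hμA b hb =>
    le_antisymm (hA hμA b hb) (hμmin b (mem_add.mpr (.inr hb)))
  obtain ⟨a, ha⟩ := exists_mem_of_ne_zero hA0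
  obtain ⟨b, hb⟩ := exists_mem_of_ne_zero hB0
  have hμA : μ ∈ A := (mem_add.mp hμ).elim id fun hμB => hA_eq hμB a ha ▸ ha
  have hμB : μ ∈ B := hB_eq hμA b hb ▸ hb
  exact hxμ ((mem_add.mp hx).elim (hA_eq hμB x) (hB_eq hμA x))

open Multiset in
theorem buildable_of_admissible {A B : Multiset ℕ} (hA : ∀ x ∈ A, 0 < x) (hB : ∀ x ∈ B, 0 < x)
    (hsum : A.sum = B.sum) (hA0 : A ≠ 0) (hB0 : B ≠ 0) (hadm : Admissible A B) :
    Buildable A B := by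
  induction hN : card A + card B using Nat.strong_induction_on generalizing A B with
  | _ N ih =>
  by_cases hA1 : card A = 1
  · obtain ⟨x, rfl⟩ := card_eq_one.mp hA1
    simpa [← hsum] using Buildable.singleton_left hB0 hB
  by_cases hB1 : card B = 1
  · obtain ⟨x, rfl⟩ := card_eq_one.mp hB1
    simpa [hsum] using (Buildable.singleton_left hA0 hA).swap
  have hp : 2 ≤ card A := by have := card_pos.mpr hA0; omega
  have hq : 2 ≤ card B := by have := card_pos.mpr hB0; omega
  clear hA1 hB1
  obtain ⟨μ, hμ, hμmin⟩ := exists_min_image id (s := A + B) (by simp [hA0])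
  simp only [id] at hμmin
  wlog h : μ ∈ B ∧ ∃ a ∈ A, μ < a generalizing A B with H
  · rcases exists_lt_across_or_forall_eq hA0 hB0 hμ hμmin with h' | h' | h'
    · exact absurd h' h
    · exact (H hB hA hsum.symm hB0 hA0 (hadm.symm hsum) (by omega) hq hp (by rwa [add_comm])
        (by rwa [add_comm]) h').swap
    · exact absurd hadm (not_admissible_of_forall_eq hq h')
  obtain ⟨hμB, hlt⟩ := h
  obtain ⟨a, ha, hμa, hadm'⟩ := exists_admissible_reduce hA hB hsum hp hadm hμB hμmin hlt
  refine Buildable.of_reduce ha hμB hμa (hB μ hμB) (ih _ ?_ ?_ ?_ ?_ ?_ ?_ hadm' rfl)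
  · rw [← hN, card_cons, card_erase_add_one ha, ← card_erase_add_one hμB]; omega
  · simp only [mem_cons]
    rintro x (rfl | hx)
    · omega
    · exact hA x (mem_of_mem_erase hx)
  · exact fun x hx => hB x (mem_of_mem_erase hx)
  · have := sum_cons_sub_erase ha hμa.le; have := sum_erase hμB; omega
  · exact cons_ne_zero
  · rw [← card_pos]; have := card_erase_add_one hμB; omega

theorem Multiset.filter_two_le_add_replicate {M : Multiset ℕ} (hM : ∀ x ∈ M, 0 < x) :
    M.filter (2 ≤ ·) + replicate (M.sum - (M.filter (2 ≤ ·)).sum) 1 = M := by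
  have hones : M.filter (¬ 2 ≤ ·) = replicate (card (M.filter (¬ 2 ≤ ·))) 1 :=
    eq_replicate.mpr ⟨rfl, fun x hx => by
      have := hM x (mem_of_mem_filter hx); have := of_mem_filter hx; omega⟩
  have hsplit := congrArg sum (filter_add_not (2 ≤ ·) M)
  rw [sum_add, hones, sum_replicate, smul_eq_mul, mul_one] at hsplit
  rw [show M.sum - (M.filter (2 ≤ ·)).sum = card (M.filter (¬ 2 ≤ ·)) by omega, ← hones,
    filter_add_not]

theorem Multiset.gcd_ofFn {α : Type*} [CommMonoidWithZero α] [NormalizedGCDMonoid α] {n : ℕ}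
    (a : Fin n → α) : (List.ofFn a : Multiset α).gcd = Finset.univ.gcd a := by
  rw [Finset.gcd_def, Fin.univ_def, Multiset.map_coe, List.ofFn_eq_map]

theorem cyclePartition_prodFormPerm {d : ℕ} {Ls : List (List (Fin d))}
    (h : Ls.flatten.Perm (List.finRange d)) (hne : ∀ l ∈ Ls, l ≠ []) :
    cyclePartition (Equiv.Perm.prodFormPerm Ls) = (Ls.map List.length : Multiset ℕ) := by
  have hsum : (Ls.map List.length : Multiset ℕ).sum = d := by
    rw [Multiset.sum_coe, ← List.length_flatten, h.length_eq, List.length_finRange]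
  have hpos : ∀ x ∈ (Ls.map List.length : Multiset ℕ), 0 < x := fun x hx => by
    obtain ⟨l, hl, rfl⟩ := List.mem_map.mp (Multiset.mem_coe.mp hx)
    exact List.length_pos_of_ne_nil (hne l hl)
  unfold cyclePartition
  rw [← Equiv.Perm.sum_cycleType,
    Equiv.Perm.cycleType_prodFormPerm (h.nodup_iff.mpr (List.nodup_finRange d)),
    ← Multiset.filter_coe]
  simpa only [hsum] using Multiset.filter_two_le_add_replicate hpos

open Multiset in
theorem exists_perms_of_admissible {d : ℕ} (hd : 0 < d) {A B : Multiset ℕ}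
    (hA : ∀ x ∈ A, 0 < x) (hB : ∀ x ∈ B, 0 < x) (hsumA : A.sum = d) (hsumB : B.sum = d)
    (h3 : 3 ≤ card A + card B) (hadm : Admissible A B) :
    ∃ τ₁ τ₂ σ : Equiv.Perm (Fin d), τ₁ * τ₂ * σ = 1 ∧ cyclePartition τ₁ = A ∧
      cyclePartition τ₂ = B ∧ σ.IsCycle ∧ σ.support.card = card A + card B - 1 ∧
      ∀ x y : Fin d, ∃ g ∈ Subgroup.closure {τ₁, τ₂, σ}, g x = y := by
  have hA0 : A ≠ 0 := by rintro rfl; simp at hsumA; omega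
  have hB0 : B ≠ 0 := by rintro rfl; simp at hsumB; omega
  obtain ⟨LA, LB, S, hc, hflat, hLA, hLB⟩ :=
    (buildable_of_admissible hA hB (hsumA.trans hsumB.symm) hA0 hB0 hadm).realizable
      (List.finRange d) (List.nodup_finRange d) (by simp [hsumA])
  have hS : S.length = card A + card B - 1 := by
    have := hc.length_eq
    rw [← hLA, ← hLB]
    simp only [coe_card, List.length_map]
    omega
  refine ⟨_, _, _, hc.mul_mul_eq_one, ?_, ?_, List.isCycle_formPerm hc.nodup_cycle (by omega),
    by rw [List.card_support_formPerm hc.nodup_cycle (by omega), hS], fun x y =>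
      hc.exists_apply_eq (Subgroup.subset_closure (by simp)) (Subgroup.subset_closure (by simp))
        (hflat.mem_iff.mpr (List.mem_finRange x)) (hflat.mem_iff.mpr (List.mem_finRange y))⟩
  · rw [cyclePartition_prodFormPerm hflat fun l hl => ?_, hLA]
    obtain ⟨s, -, hs⟩ := hc.meets_left l hl
    exact List.ne_nil_of_mem hs
  · rw [cyclePartition_prodFormPerm (hc.perm.trans hflat) fun l hl => ?_, hLB]
    obtain ⟨s, -, hs⟩ := hc.meets_right l hl
    exact List.ne_nil_of_mem hs

/-- Proposition 2.5 (Boccara): the case of three partitions (`l = 1`). -/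
theorem boccara_three_partitions (d p q : ℕ) (hd : 0 < d)
    (a : Fin p → ℕ) (b : Fin q → ℕ)
    (ha : ∀ i, 0 < a i) (hb : ∀ j, 0 < b j)
    (hsa : ∑ i, a i = d) (hsb : ∑ j, b j = d)
    (hm : 0 < p + q - 2)
    (hmax : p + q - 2 < d / Nat.gcd (Finset.univ.gcd a) (Finset.univ.gcd b)) :
    ∃ (τ₁ τ₂ σ₁ : Equiv.Perm (Fin d)),
      τ₁ * τ₂ * σ₁ = 1 ∧
      cyclePartition τ₁ = (List.ofFn a : Multiset ℕ) ∧
      cyclePartition τ₂ = (List.ofFn b : Multiset ℕ) ∧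
      σ₁.IsCycle ∧ σ₁.support.card = (p + q - 2) + 1 ∧
      (∀ x y : Fin d, ∃ g ∈ Subgroup.closure {τ₁, τ₂, σ₁}, g x = y) := by
  have hsumA : (List.ofFn a : Multiset ℕ).sum = d := by simpa [List.sum_ofFn] using hsa
  have hgcd : ((List.ofFn a : Multiset ℕ) + List.ofFn b).gcd =
      Nat.gcd (Finset.univ.gcd a) (Finset.univ.gcd b) := by
    rw [Multiset.gcd_add, Multiset.gcd_ofFn, Multiset.gcd_ofFn]; rfl
  have hadm : Admissible (List.ofFn a) (List.ofFn b) := admissible_of_lt_div (by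
    rwa [hsumA, hgcd, Multiset.coe_card, Multiset.coe_card, List.length_ofFn, List.length_ofFn])
  obtain ⟨τ₁, τ₂, σ₁, hprod, hτ₁, hτ₂, hσ₁, hcard, htrans⟩ := exists_perms_of_admissible hd
    (by simpa [List.mem_ofFn] using ha) (by simpa [List.mem_ofFn] using hb) hsumA
    (by simpa [List.sum_ofFn] using hsb) (by simp; omega) hadm
  refine ⟨τ₁, τ₂, σ₁, hprod, hτ₁, hτ₂, hσ₁, ?_, htrans⟩
  simp only [hcard, Multiset.coe_card, List.length_ofFn]
  omega
end

section
/- Let a_1,…,a_p and b_1,…,b_q be positive integers with a_1 ≤ a_2 ≤ ⋯ ≤ a_p, b_1 ≥ b_2 ≥ ⋯ ≥ b_q, 1 ≤ p ≤ q, and a_1+⋯+a_p = b_1+⋯+b_q = d. Set m = p+q−2. If m > 0 and m < d / gcd(a_1,…,a_p,b_1,…,b_q), then a_p > b_q. -/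
/-!
Suppose `a_p ≤ b_q` and put `c = a_p`. Then every `a_i ≤ c ≤ b_j`, so
`q c ≤ ∑ b_j = d = ∑ a_i ≤ p c ≤ q c`. All these inequalities are equalities: every `a_i` and
every `b_j` equals `c`, the gcd is `c` (positive, as the degree `d / c` exceeds `m`), and the
degree is `d / c = p = q`. But then
`m = 2p - 2 < p` forces `p ≤ 1`, contradicting `m > 0`.
-/

open Finset

theorem Finset.gcd_eq_normalize_of_forall_eq {α β : Type*} [CommMonoidWithZero α]
    [NormalizedGCDMonoid α] {s : Finset β} {f : β → α} {c : α} (hs : s.Nonempty)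
    (hf : ∀ i ∈ s, f i = c) : s.gcd f = normalize c := by
  classical
  rw [gcd_congr rfl hf, gcd_eq_gcd_image, image_const hs, gcd_singleton, id]

theorem forall_eq_of_le_of_le_of_sum_eq {ι κ : Type*} [Fintype ι] [Fintype κ]
    {a : ι → ℕ} {b : κ → ℕ} {c : ℕ} (hcard : Fintype.card ι ≤ Fintype.card κ)
    (ha : ∀ i, a i ≤ c) (hb : ∀ j, c ≤ b j) (hsum : ∑ i, a i = ∑ j, b j) :
    (∀ i, a i = c) ∧ ∀ j, b j = c := by
  have hsum_a : ∑ i, a i ≤ Fintype.card ι * c := by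
    simpa using sum_le_card_nsmul univ a c fun i _ => ha i
  have hsum_b : Fintype.card κ * c ≤ ∑ j, b j := by
    simpa using card_nsmul_le_sum univ b c fun j _ => hb j
  have hcard_c : Fintype.card ι * c ≤ Fintype.card κ * c := Nat.mul_le_mul_right c hcard
  have heq_a : ∑ i, a i = ∑ _i : ι, c := by simp only [sum_const, card_univ, smul_eq_mul]; omega
  have heq_b : ∑ _j : κ, c = ∑ j, b j := by simp only [sum_const, card_univ, smul_eq_mul]; omega
  exact ⟨fun i => (sum_eq_sum_iff_of_le fun i _ => ha i).mp heq_a i (mem_univ i),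
    fun j => ((sum_eq_sum_iff_of_le fun j _ => hb j).mp heq_b j (mem_univ j)).symm⟩

/-- Lemma 2.6, under the Order Assumption (OA). -/
theorem lemma_ap_gt_bq (d p q : ℕ)
    (a : Fin p → ℕ) (b : Fin q → ℕ)
    (hamono : Monotone a) (hbanti : Antitone b)
    (hp : 1 ≤ p) (hpq : p ≤ q)
    (hsa : ∑ i, a i = d) (hsb : ∑ j, b j = d)
    (hm : 0 < p + q - 2)
    (hdeg : p + q - 2 < d / Nat.gcd (Finset.univ.gcd a) (Finset.univ.gcd b)) :
    b ⟨q - 1, by omega⟩ < a ⟨p - 1, by omega⟩ := by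
  by_contra! hba
  set c := a ⟨p - 1, by omega⟩
  have hac : ∀ i, a i ≤ c := fun i => hamono (Fin.mk_le_mk.mpr (by omega))
  have hcb : ∀ j, c ≤ b j := fun j => hba.trans (hbanti (Fin.mk_le_mk.mpr (by omega)))
  obtain ⟨ha_eq, hb_eq⟩ := forall_eq_of_le_of_le_of_sum_eq (by simpa using hpq) hac hcb
    (hsa.trans hsb.symm)
  have hdp : d = p * c := by simp [← hsa, ha_eq]
  have hdq : d = q * c := by simp [← hsb, hb_eq]
  have hgcd : Nat.gcd (univ.gcd a) (univ.gcd b) = c := by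
    rw [gcd_eq_normalize_of_forall_eq ⟨⟨0, by omega⟩, mem_univ _⟩ fun i _ => ha_eq i,
      gcd_eq_normalize_of_forall_eq ⟨⟨0, by omega⟩, mem_univ _⟩ fun j _ => hb_eq j]
    simp
  have hc : 0 < c := Nat.pos_of_ne_zero fun h => by simp [hgcd, h] at hdeg
  rw [hgcd, hdp, Nat.mul_div_cancel _ hc] at hdeg
  have hpq_eq : p = q := Nat.eq_of_mul_eq_mul_right hc (hdp.symm.trans hdq)
  omega
end

section
/- Let d be a positive integer, let σ and τ be permutations of {1,…,d}, and suppose σ is a cycle of length greater than 1. Then the subgroup of S_d generated by σ and τ acts transitively on {1,…,d} if and only if for every x ∈ {1,…,d} there exists an integer n ≥ 0 such that τ^n(x) lies in the support of σ (equivalently, every cycle factor of τ, with fixed points counted as cycles of length 1, intersects the support of σ). -/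
/-- Lemma 2.8: the subgroup generated by a cycle `σ` of length `> 1` and a permutation `τ`
acts transitively iff every cycle factor of `τ` (fixed points counted as cycles of length `1`)
intersects the support of `σ`. -/
theorem transitive_iff_cycle_factors_meet (d : ℕ) (hd : 0 < d)
    (σ τ : Equiv.Perm (Fin d)) (hσ : σ.IsCycle) (hlen : 1 < σ.support.card) :
    (∀ x y : Fin d, ∃ g ∈ Subgroup.closure {σ, τ}, g x = y) ↔
      (∀ x : Fin d, ∃ n : ℕ, (τ ^ n) x ∈ σ.support) := by
  have hσmem : σ ∈ Subgroup.closure {σ, τ} := Subgroup.subset_closure (by simp)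
  have hτmem : τ ∈ Subgroup.closure {σ, τ} := Subgroup.subset_closure (by simp)
  obtain ⟨a, ha⟩ : σ.support.Nonempty := Finset.card_pos.mp (by omega)
  constructor
  · intro htrans x
    -- the set of points eventually hitting the support
    set A : Set (Fin d) := {z | ∃ n : ℕ, (τ ^ n) z ∈ σ.support} with hA
    have hordτ : 0 < orderOf τ := orderOf_pos τ
    -- A is invariant under both generators and their inverses
    have hAτ : ∀ z ∈ A, τ z ∈ A := by
      intro z ⟨n, hn⟩
      refine ⟨n + orderOf τ - 1, ?_⟩
      have hk : n + orderOf τ - 1 + 1 = n + orderOf τ := by omega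
      have : (τ ^ (n + orderOf τ - 1)) (τ z) = (τ ^ (n + orderOf τ)) z := by
        rw [← Equiv.Perm.mul_apply, ← pow_succ, hk]
      rw [this, pow_add, Equiv.Perm.mul_apply, pow_orderOf_eq_one]
      simpa using hn
    have hAτinv : ∀ z ∈ A, τ⁻¹ z ∈ A := by
      intro z ⟨n, hn⟩
      refine ⟨n + 1, ?_⟩
      have : (τ ^ (n + 1)) (τ⁻¹ z) = (τ ^ n) z := by
        rw [pow_succ, Equiv.Perm.mul_apply]
        simp
      rw [this]; exact hn
    have hAσ : ∀ z ∈ A, σ z ∈ A := by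
      intro z ⟨n, hn⟩
      by_cases hz : z ∈ σ.support
      · exact ⟨0, by simpa using Equiv.Perm.apply_mem_support.mpr hz⟩
      · rw [Equiv.Perm.notMem_support] at hz
        rw [hz]; exact ⟨n, hn⟩
    have hAσinv : ∀ z ∈ A, σ⁻¹ z ∈ A := by
      intro z ⟨n, hn⟩
      by_cases hz : z ∈ σ.support
      · refine ⟨0, ?_⟩
        have h2 : σ⁻¹ z ∈ σ⁻¹.support := Equiv.Perm.apply_mem_support.mpr
          (by rw [Equiv.Perm.support_inv]; exact hz)
        rw [Equiv.Perm.support_inv] at h2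
        simpa using h2
      · rw [Equiv.Perm.notMem_support] at hz
        have : σ⁻¹ z = z := by
          conv_lhs => rw [← hz]
          simp
        rw [this]; exact ⟨n, hn⟩
    -- hence A is invariant under the whole closure
    have key : ∀ g ∈ Subgroup.closure {σ, τ}, ∀ z ∈ A, g z ∈ A ∧ g⁻¹ z ∈ A := by
      intro g hg
      induction hg using Subgroup.closure_induction with
      | mem w hw =>
        rcases hw with rfl | rfl
        · exact fun z hz => ⟨hAσ z hz, hAσinv z hz⟩
        · exact fun z hz => ⟨hAτ z hz, hAτinv z hz⟩
      | one => simp only [Equiv.Perm.one_apply, inv_one]; exact fun z hz => ⟨hz, hz⟩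
      | mul u v hu hv ihu ihv =>
        intro z hz
        refine ⟨(ihu _ ((ihv z hz).1)).1, ?_⟩
        have := (ihv _ ((ihu z hz).2)).2
        simpa [Equiv.Perm.mul_apply] using this
      | inv u hu ihu =>
        intro z hz
        exact ⟨(ihu z hz).2, by simpa using (ihu z hz).1⟩
    obtain ⟨g, hg, hgx⟩ := htrans a x
    have haA : a ∈ A := ⟨0, by simpa using ha⟩
    exact hgx ▸ (key g hg a haA).1
  · intro h x y
    obtain ⟨n, hn⟩ := h x
    obtain ⟨m, hm⟩ := h y
    obtain ⟨i, hi⟩ := hσ.exists_pow_eq (Equiv.Perm.mem_support.mp hn)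
      (Equiv.Perm.mem_support.mp hm)
    refine ⟨(τ⁻¹) ^ m * σ ^ i * τ ^ n, ?_, ?_⟩
    · exact Subgroup.mul_mem _ (Subgroup.mul_mem _ (Subgroup.pow_mem _
        (Subgroup.inv_mem _ hτmem) m) (Subgroup.pow_mem _ hσmem i))
        (Subgroup.pow_mem _ hτmem n)
    · simp only [Equiv.Perm.mul_apply, hi, inv_pow]
      simp
end

section
/- Let d and m be positive integers with m+1 ≤ d, let a_1,…,a_p and b_1,…,b_q be positive integers with a_1+⋯+a_p = b_1+⋯+b_q = d, and let τ_1, τ_2, σ_1 be permutations of {1,…,d} such that τ_1 τ_2 σ_1 is the identity, the cycle partition of τ_1 is (a_1,…,a_p), the cycle partition of τ_2 is (b_1,…,b_q), and σ_1 is a cycle of length m+1. Then the subgroup of S_d generated by τ_1, τ_2, σ_1 acts transitively on {1,…,d} if and only if for every x ∈ {1,…,d} there exist integers n, n' ≥ 0 such that τ_1^n(x) lies in the support of σ_1 and τ_2^{n'}(x) lies in the support of σ_1 (equivalently, every cycle factor of τ_1 and of τ_2 intersects the support of σ_1). -/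
/-!
Since `τ₂ = τ₁⁻¹ σ₁⁻¹` and `τ₁ = σ₁⁻¹ τ₂⁻¹`, the group generated by `τ₁, τ₂, σ₁` is
generated by `τ₁, σ₁` alone, and also by `τ₂, σ₁` alone. A `τ`-cycle on which `σ` acts
trivially is invariant under `⟨τ, σ⟩`, so transitivity forces every cycle of `τ₁` and of `τ₂`
to meet the support of `σ₁`. Conversely, if every `τ₁`-cycle meets the support of the cycle
`σ₁`, any point can be moved along its `τ₁`-cycle into that support, around `σ₁`, and back
out along another `τ₁`-cycle.
-/

namespace Subgroup

variable {G : Type*} [Group G] {a b c : G}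

theorem closure_triple_eq_closure_pair_left (h : a * b * c = 1) :
    closure {a, b, c} = closure {a, c} := by
  have hb : b = a⁻¹ * c⁻¹ := calc
    b = a⁻¹ * (a * b * c) * c⁻¹ := by group
    _ = a⁻¹ * c⁻¹ := by rw [h, mul_one]
  refine le_antisymm (closure_le _ |>.mpr ?_) (closure_mono (by grind))
  rintro x (rfl | rfl | rfl)
  · exact subset_closure (by simp)
  · rw [hb]
    exact mul_mem (inv_mem (subset_closure (by simp))) (inv_mem (subset_closure (by simp)))
  · exact subset_closure (by simp)

theorem closure_triple_eq_closure_pair_right (h : a * b * c = 1) :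
    closure {a, b, c} = closure {b, c} := by
  have ha : a = c⁻¹ * b⁻¹ := calc
    a = a * b * c * c⁻¹ * b⁻¹ := by group
    _ = c⁻¹ * b⁻¹ := by rw [h, one_mul]
  refine le_antisymm (closure_le _ |>.mpr ?_) (closure_mono (by grind))
  rintro x (rfl | rfl | rfl)
  · rw [ha]
    exact mul_mem (inv_mem (subset_closure (by simp))) (inv_mem (subset_closure (by simp)))
  · exact subset_closure (by simp)
  · exact subset_closure (by simp)

end Subgroup

namespace Equiv.Perm

open Subgroup

variable {α : Type*} {τ σ g : Perm α} {x : α}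

theorem sameCycle_apply_iff_of_mem_closure (hfix : ∀ y, τ.SameCycle x y → σ y = y)
    (hg : g ∈ closure {τ, σ}) (y : α) : τ.SameCycle x (g y) ↔ τ.SameCycle x y := by
  induction hg using closure_induction generalizing y with
  | mem z hz =>
    rcases hz with hz | hz <;> subst z
    · exact sameCycle_apply_right
    · refine ⟨fun h => ?_, fun h => by rwa [hfix y h]⟩
      -- `σ` fixes `σ y`, hence `σ y = y` by injectivity
      have hy : σ y = y := σ.injective (hfix _ h)
      rwa [hy] at h
  | one => rfl
  | mul g h _ _ ihg ihh => rw [mul_apply, ihg, ihh]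
  | inv g _ ihg => simpa only [coe_inv, Equiv.apply_symm_apply] using (ihg (g⁻¹ y)).symm

variable [Fintype α] [DecidableEq α]

theorem exists_pow_apply_mem_support_of_mem_closure (hg : g ∈ closure {τ, σ})
    (h : g x ∈ σ.support) : ∃ n : ℕ, (τ ^ n) x ∈ σ.support := by
  by_contra! hx
  have hfix : ∀ y, τ.SameCycle x y → σ y = y := fun y hy => by
    obtain ⟨n, rfl⟩ := hy.exists_nat_pow_eq
    exact notMem_support.mp (hx n)
  have hgx : τ.SameCycle x (g x) := (sameCycle_apply_iff_of_mem_closure hfix hg x).mpr (.refl τ x)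
  obtain ⟨n, hn⟩ := hgx.exists_nat_pow_eq
  exact hx n (hn ▸ h)

theorem IsCycle.exists_mem_closure_apply_eq (hσ : σ.IsCycle)
    (h : ∀ x, ∃ n : ℕ, (τ ^ n) x ∈ σ.support) (x y : α) :
    ∃ g ∈ closure {τ, σ}, g x = y := by
  obtain ⟨n, hn⟩ := h x
  obtain ⟨n', hn'⟩ := h y
  obtain ⟨k, hk⟩ := hσ.exists_pow_eq (mem_support.mp hn) (mem_support.mp hn')
  have hτ : τ ∈ closure {τ, σ} := subset_closure (by simp)
  have hσ' : σ ∈ closure {τ, σ} := subset_closure (by simp)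
  refine ⟨(τ ^ n')⁻¹ * (σ ^ k * τ ^ n), ?_, ?_⟩
  · exact mul_mem (inv_mem (pow_mem hτ n')) (mul_mem (pow_mem hσ' k) (pow_mem hτ n))
  · rw [mul_apply, mul_apply, hk]
    exact Equiv.symm_apply_apply _ y

end Equiv.Perm

theorem transitive_iff_both_meet_general (d : ℕ)
    (τ₁ τ₂ σ₁ : Equiv.Perm (Fin d))
    (hprod : τ₁ * τ₂ * σ₁ = 1)
    (hσ₁ : σ₁.IsCycle) :
    (∀ x y : Fin d, ∃ g ∈ Subgroup.closure {τ₁, τ₂, σ₁}, g x = y) ↔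
      (∀ x : Fin d, (∃ n : ℕ, (τ₁ ^ n) x ∈ σ₁.support) ∧
        (∃ n' : ℕ, (τ₂ ^ n') x ∈ σ₁.support)) := by
  have hG₁ := Subgroup.closure_triple_eq_closure_pair_left hprod
  have hG₂ := Subgroup.closure_triple_eq_closure_pair_right hprod
  constructor
  · intro htrans x
    obtain ⟨w, hw⟩ := hσ₁.nonempty_support
    obtain ⟨g, hg, rfl⟩ := htrans x w
    exact ⟨Equiv.Perm.exists_pow_apply_mem_support_of_mem_closure (hG₁ ▸ hg) hw,
      Equiv.Perm.exists_pow_apply_mem_support_of_mem_closure (hG₂ ▸ hg) hw⟩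
  · intro h
    rw [hG₁]
    exact hσ₁.exists_mem_closure_apply_eq fun x => (h x).1

/-- Lemma 2.10. -/
theorem transitive_iff_both_meet (d m p q : ℕ) (hd : 0 < d) (hm : 0 < m) (hmd : m + 1 ≤ d)
    (a : Fin p → ℕ) (b : Fin q → ℕ)
    (ha : ∀ i, 0 < a i) (hb : ∀ j, 0 < b j)
    (hsa : ∑ i, a i = d) (hsb : ∑ j, b j = d)
    (τ₁ τ₂ σ₁ : Equiv.Perm (Fin d))
    (hprod : τ₁ * τ₂ * σ₁ = 1)
    (hτ₁ : cyclePartition τ₁ = (List.ofFn a : Multiset ℕ))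
    (hτ₂ : cyclePartition τ₂ = (List.ofFn b : Multiset ℕ))
    (hσ₁ : σ₁.IsCycle) (hσ₁len : σ₁.support.card = m + 1) :
    (∀ x y : Fin d, ∃ g ∈ Subgroup.closure {τ₁, τ₂, σ₁}, g x = y) ↔
      (∀ x : Fin d, (∃ n : ℕ, (τ₁ ^ n) x ∈ σ₁.support) ∧
        (∃ n' : ℕ, (τ₂ ^ n') x ∈ σ₁.support)) :=
  transitive_iff_both_meet_general d τ₁ τ₂ σ₁ hprod hσ₁
end

section
/- Let d > 1 be an integer, let Γ be a subgroup of the symmetric group S_d on {1,…,d}, and let θ ∈ S_d be a cycle of length greater than 1. Suppose the subgroup G of S_d generated by Γ and θ acts transitively on {1,…,d}. Then for every x ∈ {1,…,d} not in the support of θ, there exists γ ∈ Γ such that γ(x) lies in the support of θ. -/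
/-- Lemma 2.12. -/
theorem orbit_meets_cycle (d : ℕ) (hd : 1 < d)
    (Γ : Subgroup (Equiv.Perm (Fin d))) (θ : Equiv.Perm (Fin d))
    (hθ : θ.IsCycle) (hlen : 1 < θ.support.card)
    (htrans : ∀ x y : Fin d,
      ∃ g ∈ Subgroup.closure ((Γ : Set (Equiv.Perm (Fin d))) ∪ {θ}), g x = y) :
    ∀ x : Fin d, x ∉ θ.support → ∃ γ ∈ Γ, γ x ∈ θ.support := by
  intro x hx
  by_contra hcon
  push_neg at hcon
  set A : Set (Fin d) := {z | ∃ γ ∈ Γ, γ x = z} with hA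
  have hAx : x ∈ A := ⟨1, Γ.one_mem, rfl⟩
  have hAsupp : ∀ a ∈ A, a ∉ θ.support := by
    rintro a ⟨γ, hγ, rfl⟩
    exact hcon γ hγ
  have key : ∀ g ∈ Subgroup.closure ((Γ : Set (Equiv.Perm (Fin d))) ∪ {θ}),
      ∀ a : Fin d, a ∈ A ↔ g a ∈ A := by
    intro g hg
    induction hg using Subgroup.closure_induction with
    | mem g hg =>
      rcases hg with hg | hg
      · intro a
        constructor
        · rintro ⟨γ, hγ, rfl⟩
          exact ⟨g * γ, Γ.mul_mem hg hγ, rfl⟩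
        · rintro ⟨γ, hγ, hγa⟩
          refine ⟨g⁻¹ * γ, Γ.mul_mem (Γ.inv_mem hg) hγ, ?_⟩
          simp [Equiv.Perm.mul_apply, hγa]
      · simp only [Set.mem_singleton_iff] at hg
        intro a
        rw [hg]
        constructor
        · intro ha
          rwa [Equiv.Perm.notMem_support.mp (hAsupp a ha)]
        · intro ha
          by_cases h : a ∈ θ.support
          · exact absurd ((Equiv.Perm.apply_mem_support.mpr h))
              (hAsupp _ ha)
          · rwa [Equiv.Perm.notMem_support.mp h] at ha
    | one => simp
    | mul g h _ _ ihg ihh =>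
      intro a
      rw [ihh a, ihg (h a)]
      rfl
    | inv g _ ihg =>
      intro a
      rw [ihg (g⁻¹ a)]
      simp
  obtain ⟨y, hy⟩ := Equiv.Perm.IsCycle.nonempty_support hθ
  obtain ⟨g, hg, hgx⟩ := htrans x y
  have : y ∈ A := by rw [← hgx]; exact (key g hg x).mp hAx
  exact hAsupp y this hy
end
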